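/- arXiv:math/0312031 — 3 statements merged into one kernel-verified Lean document; each statement's English description precedes it below -/
import Mathlib

section
/- Let P be an m-dimensional convex polytope in R^q and let v_1,...,v_n be the vertices of a special simplex in P (i.e., each facet of P contains exactly n-1 of the vertices v_1,...,v_n). If F is a face of P of codimension k for some 1 ≤ k ≤ n-1 and F does not contain any of v_1,...,v_k, then F contains v_i for all k+1 ≤ i ≤ n. -/
/-!
A nonempty face `F` of `P = conv V` with `dim F ≤ dim P - 2` is the intersection of two strictly
larger faces: tilt the functional exposing `F` about `F`, in two directions, until it meets new
vertices. By induction on the codimension, every point of `P` outside `F` is missed by some facet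
containing `F`.

If some `v i` with `k ≤ i` were not in `F`, choose such facets `G j ⊇ F` missing `v j`, for all
`j < k` and for `j = i`. A facet misses only one of the `v`'s, so `v j` lies in every other `G l`,
and intersecting the `k + 1` facets one at a time lowers the dimension each time; then
`dim F ≤ m - k - 1`, contradicting `dim F = m - k`.
-/

/-- The dimension of a subset of `ι → ℝ`, as the rank of its vector span. -/
noncomputable def pdim {ι : Type*} (S : Set (ι → ℝ)) : ℕ :=
  Module.finrank ℝ (vectorSpan ℝ S)

/-- `F` is a face of the polytope `P`: either `P` itself or the set of points of `P`
where some linear functional bounded above on `P` attains its maximum value. -/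
def IsFaceOf {ι : Type*} (F P : Set (ι → ℝ)) : Prop :=
  F = P ∨ ∃ (f : (ι → ℝ) →ₗ[ℝ] ℝ) (c : ℝ), (∀ x ∈ P, f x ≤ c) ∧ F = {x ∈ P | f x = c}

/-- `F` is a facet of `P`: a nonempty proper face of codimension one. -/
def IsFacetOf {ι : Type*} (F P : Set (ι → ℝ)) : Prop :=
  IsFaceOf F P ∧ F.Nonempty ∧ F ≠ P ∧ pdim F + 1 = pdim P

open Set

section Faces

variable {ι : Type*}

lemma IsFaceOf.subset {F P : Set (ι → ℝ)} (hF : IsFaceOf F P) : F ⊆ P := by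
  rcases hF with rfl | ⟨f, c, -, rfl⟩
  exacts [subset_rfl, sep_subset _ _]

lemma isFaceOf_sep_eq_zero {P : Set (ι → ℝ)} (g : (ι → ℝ) →ᵃ[ℝ] ℝ)
    (hg : ∀ x ∈ P, 0 ≤ g x) : IsFaceOf {x ∈ P | g x = 0} P := by
  have hdecomp (x : ι → ℝ) : g x = g.linear x + g 0 := congrFun g.decomp x
  refine Or.inr ⟨-g.linear, g 0, fun x hx => ?_, ?_⟩
  · have := hg x hx
    rw [hdecomp] at this
    simp only [LinearMap.neg_apply]
    linarith
  · ext x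
    refine and_congr_right fun _ => ?_
    rw [hdecomp, LinearMap.neg_apply]
    constructor <;> intro h <;> linarith

lemma IsFaceOf.exists_affineMap {F P : Set (ι → ℝ)} (hF : IsFaceOf F P) (hFP : F ≠ P) :
    ∃ g : (ι → ℝ) →ᵃ[ℝ] ℝ, (∀ x ∈ P, 0 ≤ g x) ∧ F = {x ∈ P | g x = 0} := by
  obtain ⟨f, c, hf, rfl⟩ := hF.resolve_left hFP
  refine ⟨AffineMap.const ℝ _ c - f.toAffineMap, fun x hx => by simpa using hf x hx, ?_⟩
  ext x
  refine and_congr_right fun _ => ?_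
  simp only [AffineMap.coe_sub, AffineMap.coe_const, LinearMap.coe_toAffineMap, Pi.sub_apply,
    Function.const_apply]
  rw [sub_eq_zero, eq_comm]

lemma IsFaceOf.inter {F G P : Set (ι → ℝ)} (hF : IsFaceOf F P) (hG : IsFaceOf G P) :
    IsFaceOf (F ∩ G) P := by
  by_cases hFP : F = P
  · rwa [hFP, inter_eq_right.2 hG.subset]
  by_cases hGP : G = P
  · rwa [hGP, inter_eq_left.2 hF.subset]
  obtain ⟨g, hg, rfl⟩ := hF.exists_affineMap hFP
  obtain ⟨g', hg', rfl⟩ := hG.exists_affineMap hGP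
  convert isFaceOf_sep_eq_zero (g + g') (fun x hx => add_nonneg (hg x hx) (hg' x hx)) using 1
  ext x
  simp only [mem_inter_iff, mem_ofPred_eq, AffineMap.coe_add, Pi.add_apply]
  constructor
  · rintro ⟨⟨hx, h₁⟩, -, h₂⟩
    exact ⟨hx, by rw [h₁, h₂, add_zero]⟩
  · rintro ⟨hx, h⟩
    have := hg x hx
    have := hg' x hx
    exact ⟨⟨hx, by linarith⟩, hx, by linarith⟩

lemma isFaceOf_inter_biInter {α : Type*} {P : Set (ι → ℝ)} (G : α → Set (ι → ℝ))
    (s : Finset α) (hG : ∀ j ∈ s, IsFaceOf (G j) P) : IsFaceOf (P ∩ ⋂ j ∈ s, G j) P := by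
  classical
  induction s using Finset.induction_on with
  | empty =>
    simp only [Finset.notMem_empty, iInter_of_empty, iInter_univ, inter_univ]
    exact Or.inl rfl
  | insert a s _ ih =>
    rw [Finset.set_biInter_insert, inter_left_comm]
    exact (hG a (Finset.mem_insert_self a s)).inter
      (ih fun j hj => hG j (Finset.mem_insert_of_mem hj))

end Faces

lemma AffineMap.exists_eq_zero_of_notMem_affineSpan {k E : Type*} [Field k] [AddCommGroup E]
    [Module k E] {s : Set E} {p : E} (hs : s.Nonempty) (hp : p ∉ affineSpan k s) :
    ∃ ℓ : E →ᵃ[k] k, (∀ x ∈ s, ℓ x = 0) ∧ ℓ p ≠ 0 := by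
  obtain ⟨a, ha⟩ := hs
  have hpa : p -ᵥ a ∉ vectorSpan k s := by
    rwa [← direction_affineSpan,
      AffineSubspace.vsub_right_mem_direction_iff_mem (subset_affineSpan k s ha)]
  obtain ⟨φ, hφp, hφs⟩ := Submodule.exists_dual_map_eq_bot_of_notMem hpa inferInstance
  refine ⟨φ.toAffineMap - AffineMap.const k E (φ a), fun x hx => ?_, ?_⟩
  · have hx' := Submodule.mem_map_of_mem (f := φ) (vsub_mem_vectorSpan k hx ha)
    rw [hφs, Submodule.mem_bot] at hx'
    simpa [sub_eq_zero] using hx'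
  · simpa [sub_eq_zero] using hφp

lemma Finset.exists_pos_mul_le_and_eq {α : Type*} (s : Finset α) (g ℓ : α → ℝ)
    (hg : ∀ u ∈ s, 0 ≤ g u) (hgℓ : ∀ u ∈ s, 0 < ℓ u → 0 < g u) (hℓ : ∃ u ∈ s, 0 < ℓ u) :
    ∃ t : ℝ, 0 < t ∧ (∀ u ∈ s, t * ℓ u ≤ g u) ∧ ∃ u ∈ s, 0 < ℓ u ∧ t * ℓ u = g u := by
  classical
  set S := s.filter fun u => 0 < ℓ u
  have hS : S.Nonempty := by simpa [S, Finset.filter_nonempty_iff] using hℓ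
  obtain ⟨u₀, hu₀S, ht⟩ := S.exists_mem_eq_inf' hS fun u => g u / ℓ u
  obtain ⟨hu₀, hℓu₀⟩ := Finset.mem_filter.1 hu₀S
  refine ⟨g u₀ / ℓ u₀, div_pos (hgℓ u₀ hu₀ hℓu₀) hℓu₀, fun u hu => ?_,
    u₀, hu₀, hℓu₀, div_mul_cancel₀ _ hℓu₀.ne'⟩
  rcases le_or_gt (ℓ u) 0 with hℓu | hℓu
  · exact (mul_nonpos_of_nonneg_of_nonpos (div_pos (hgℓ u₀ hu₀ hℓu₀) hℓu₀).le hℓu).trans (hg u hu)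
  · rw [← ht, ← le_div_iff₀ hℓu]
    exact S.inf'_le _ (Finset.mem_filter.2 ⟨hu, hℓu⟩)

section Dimension

variable {ι : Type*} [Finite ι]

lemma pdim_mono {S T : Set (ι → ℝ)} (h : S ⊆ T) : pdim S ≤ pdim T :=
  Submodule.finrank_mono (vectorSpan_mono ℝ h)

lemma IsFaceOf.pdim_lt {F G P : Set (ι → ℝ)} (hF : IsFaceOf F P) (hGP : G ⊆ P) (hFG : F ⊂ G)
    (hne : F.Nonempty) : pdim F < pdim G := by
  obtain ⟨g, -, rfl⟩ := hF.exists_affineMap fun h => hFG.not_subset (h ▸ hGP)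
  by_contra! hle
  set F := {x ∈ P | g x = 0}
  have hspan : affineSpan ℝ F = affineSpan ℝ G := by
    refine AffineSubspace.eq_of_direction_eq_of_nonempty_of_le ?_
      ((affineSpan_nonempty ℝ).2 hne) (affineSpan_mono ℝ hFG.subset)
    rw [direction_affineSpan, direction_affineSpan]
    exact Submodule.eq_of_le_of_finrank_le (vectorSpan_mono ℝ hFG.subset) hle
  have hzero : affineSpan ℝ F ≤ (affineSpan ℝ {0}).comap g :=
    affineSpan_le.2 fun x hx => by simp [hx.2]
  refine hFG.not_subset fun x hx => ⟨hGP hx, ?_⟩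
  simpa using hzero (hspan ▸ subset_affineSpan ℝ G hx)

end Dimension

lemma AffineMap.nonneg_of_mem_convexHull {E : Type*} [AddCommGroup E] [Module ℝ E] {s : Set E}
    (g : E →ᵃ[ℝ] ℝ) (hg : ∀ u ∈ s, 0 ≤ g u) {x : E} (hx : x ∈ convexHull ℝ s) : 0 ≤ g x :=
  convexHull_min hg ((convex_Ici 0).affine_preimage g) hx

section Splitting

variable {ι : Type*} (V : Finset (ι → ℝ))

/-- Two faces `{ℓ = 0}` and `{h = t ℓ}` through `{h = 0}`, where `t > 0` is largest with
`t ℓ ≤ h` on the vertices; the witnesses `u₀` and `w` make both strictly larger. -/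
lemma exists_faces_inter_eq_of_pivot (h ℓ : (ι → ℝ) →ᵃ[ℝ] ℝ)
    (hh : ∀ u ∈ V, 0 ≤ h u) (hℓ : ∀ u ∈ V, 0 ≤ ℓ u)
    (hℓh : ∀ x ∈ convexHull ℝ ↑V, h x = 0 → ℓ x = 0)
    (hu₀ : ∃ u ∈ V, ℓ u = 0 ∧ 0 < h u) (hw : ∃ w ∈ V, 0 < ℓ w) :
    ∃ F₁ F₂, IsFaceOf F₁ (convexHull ℝ ↑V) ∧ IsFaceOf F₂ (convexHull ℝ ↑V) ∧
      {x ∈ convexHull ℝ ↑V | h x = 0} ⊂ F₁ ∧ {x ∈ convexHull ℝ ↑V | h x = 0} ⊂ F₂ ∧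
      F₁ ∩ F₂ = {x ∈ convexHull ℝ ↑V | h x = 0} := by
  have hpos (u) (hu : u ∈ V) (hℓu : 0 < ℓ u) : 0 < h u :=
    (hh u hu).lt_of_ne' fun h0 => hℓu.ne' (hℓh u (subset_convexHull ℝ _ hu) h0)
  obtain ⟨t, -, hle, u', hu', hℓu', heq⟩ := V.exists_pos_mul_le_and_eq h ℓ hh hpos hw
  obtain ⟨u₀, hu₀, hℓu₀, hhu₀⟩ := hu₀
  have hg : ∀ u ∈ V, 0 ≤ (h - t • ℓ) u := fun u hu => by
    simpa using hle u hu
  set P := convexHull ℝ (V : Set (ι → ℝ))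
  have hF₁ : {x ∈ P | h x = 0} ⊆ {x ∈ P | ℓ x = 0} := fun x hx => ⟨hx.1, hℓh x hx.1 hx.2⟩
  have hF₂ : {x ∈ P | h x = 0} ⊆ {x ∈ P | (h - t • ℓ) x = 0} := fun x hx =>
    ⟨hx.1, by simp [hx.2, hℓh x hx.1 hx.2]⟩
  refine ⟨_, _, isFaceOf_sep_eq_zero ℓ fun x => ℓ.nonneg_of_mem_convexHull hℓ,
    isFaceOf_sep_eq_zero (h - t • ℓ) fun x => (h - t • ℓ).nonneg_of_mem_convexHull hg,
    (ssubset_iff_of_subset hF₁).2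
      ⟨u₀, ⟨subset_convexHull ℝ _ hu₀, hℓu₀⟩, fun hu => hhu₀.ne' hu.2⟩,
    (ssubset_iff_of_subset hF₂).2
      ⟨u', ⟨subset_convexHull ℝ _ hu', by simp [heq]⟩, fun hu => (hpos u' hu' hℓu').ne' hu.2⟩,
    ?_⟩
  ext x
  simp only [mem_inter_iff, mem_ofPred_eq, AffineMap.coe_sub, AffineMap.coe_smul, Pi.sub_apply,
    Pi.smul_apply, smul_eq_mul]
  constructor
  · rintro ⟨⟨hx, hℓx⟩, -, hx'⟩
    exact ⟨hx, by simpa [hℓx] using hx'⟩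
  · rintro ⟨hx, hhx⟩
    exact ⟨⟨hx, hℓh x hx hhx⟩, hx, by simp [hhx, hℓh x hx hhx]⟩

/-- A functional `ℓ₁` vanishing on `F = {h = 0}` and on a vertex `w ∉ F` but not on all of `V`
exists since `dim F + 2 ≤ dim P`; tilting `h` against `ℓ₁` until a vertex `u₀` is hit gives
`ℓ = h - μ ℓ₁`. -/
lemma exists_pivot [Finite ι] (h : (ι → ℝ) →ᵃ[ℝ] ℝ) (hh : ∀ u ∈ V, 0 ≤ h u)
    (hcodim : pdim {x ∈ convexHull ℝ ↑V | h x = 0} + 2 ≤ pdim (convexHull ℝ (V : Set (ι → ℝ)))) :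
    ∃ ℓ : (ι → ℝ) →ᵃ[ℝ] ℝ, (∀ u ∈ V, 0 ≤ ℓ u) ∧
      (∀ x ∈ convexHull ℝ ↑V, h x = 0 → ℓ x = 0) ∧
      (∃ u ∈ V, ℓ u = 0 ∧ 0 < h u) ∧ ∃ w ∈ V, 0 < ℓ w := by
  set P := convexHull ℝ (V : Set (ι → ℝ))
  set F := {x ∈ P | h x = 0}
  obtain ⟨w, hwV, hw⟩ : ∃ w ∈ V, 0 < h w := by
    by_contra! hV
    have hFP : F = P := sep_eq_self_iff_mem_true.2 fun x hx =>
      le_antisymm (by simpa using (-h).nonneg_of_mem_convexHull (by simpa using hV) hx)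
        (h.nonneg_of_mem_convexHull hh hx)
    rw [hFP] at hcodim
    omega
  obtain ⟨p, hpV, hp⟩ : ∃ p ∈ V, p ∉ affineSpan ℝ (insert w F) := by
    by_contra! hV
    have hPspan : P ⊆ affineSpan ℝ (insert w F) :=
      (convexHull_subset_affineSpan _).trans (affineSpan_le.2 hV)
    have := Submodule.finrank_mono (vectorSpan_mono ℝ hPspan)
    rw [← AffineSubspace.direction, direction_affineSpan] at this
    have := finrank_vectorSpan_insert_le_set ℝ F w
    unfold pdim at hcodim
    omega
  obtain ⟨ℓ₁, hℓ₁, hℓ₁p⟩ : ∃ ℓ₁ : (ι → ℝ) →ᵃ[ℝ] ℝ, (∀ x ∈ insert w F, ℓ₁ x = 0) ∧ 0 < ℓ₁ p := by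
    obtain ⟨ℓ₁, hℓ₁, hℓ₁p⟩ :=
      AffineMap.exists_eq_zero_of_notMem_affineSpan (insert_nonempty w F) hp
    rcases hℓ₁p.lt_or_gt with hneg | hpos
    · exact ⟨-ℓ₁, fun x hx => by simp [hℓ₁ x hx], by simpa using hneg⟩
    · exact ⟨ℓ₁, hℓ₁, hpos⟩
  have hpos (u) (hu : u ∈ V) (hℓ₁u : 0 < ℓ₁ u) : 0 < h u :=
    (hh u hu).lt_of_ne' fun h0 =>
      hℓ₁u.ne' (hℓ₁ u (mem_insert_of_mem _ ⟨subset_convexHull ℝ _ hu, h0⟩))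
  obtain ⟨μ, -, hle, u₀, hu₀, hℓ₁u₀, heq⟩ :=
    V.exists_pos_mul_le_and_eq h ℓ₁ hh hpos ⟨p, hpV, hℓ₁p⟩
  refine ⟨h - μ • ℓ₁, fun u hu => by simpa using hle u hu,
    fun x hx hhx => by simp [hhx, hℓ₁ x (mem_insert_of_mem _ ⟨hx, hhx⟩)],
    ⟨u₀, hu₀, by simp [heq], hpos u₀ hu₀ hℓ₁u₀⟩, w, hwV, by simp [hw, hℓ₁ w (mem_insert w F)]⟩

theorem IsFaceOf.exists_ssubset_inter_eq [Finite ι] {F : Set (ι → ℝ)}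
    (hF : IsFaceOf F (convexHull ℝ ↑V))
    (hcodim : pdim F + 2 ≤ pdim (convexHull ℝ (V : Set (ι → ℝ)))) :
    ∃ F₁ F₂, IsFaceOf F₁ (convexHull ℝ ↑V) ∧ IsFaceOf F₂ (convexHull ℝ ↑V) ∧
      F ⊂ F₁ ∧ F ⊂ F₂ ∧ F₁ ∩ F₂ = F := by
  obtain ⟨h, hh, rfl⟩ := hF.exists_affineMap (by rintro rfl; omega)
  have hhV (u) (hu : u ∈ V) : 0 ≤ h u := hh u (subset_convexHull ℝ _ hu)
  obtain ⟨ℓ, hℓ, hℓh, hu₀, hw⟩ := exists_pivot V h hhV hcodim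
  exact exists_faces_inter_eq_of_pivot V h ℓ hhV hℓ hℓh hu₀ hw

end Splitting

section Facets

variable {ι : Type*} [Finite ι]

theorem IsFaceOf.exists_isFacetOf_superset_notMem (V : Finset (ι → ℝ)) {F : Set (ι → ℝ)}
    (hF : IsFaceOf F (convexHull ℝ ↑V)) (hne : F.Nonempty) {x : ι → ℝ}
    (hxP : x ∈ convexHull ℝ ↑V) (hxF : x ∉ F) :
    ∃ G, IsFacetOf G (convexHull ℝ ↑V) ∧ F ⊆ G ∧ x ∉ G := by
  set P := convexHull ℝ (V : Set (ι → ℝ))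
  obtain ⟨d, hd⟩ : ∃ d, pdim P - pdim F = d := ⟨_, rfl⟩
  induction d using Nat.strong_induction_on generalizing F with
  | _ d ih =>
    have hFP : F ≠ P := fun h => hxF (h ▸ hxP)
    have hlt : pdim F < pdim P := hF.pdim_lt subset_rfl (hF.subset.ssubset_of_ne hFP) hne
    rcases (by omega : pdim F + 1 = pdim P ∨ pdim F + 2 ≤ pdim P) with hfacet | hcodim
    · exact ⟨F, ⟨hF, hne, hFP, hfacet⟩, subset_rfl, hxF⟩
    obtain ⟨F₁, F₂, hF₁, hF₂, h₁, h₂, rfl⟩ := hF.exists_ssubset_inter_eq V hcodim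
    have of_ssuperset {F'} (hF' : IsFaceOf F' P) (hF'lt : F₁ ∩ F₂ ⊂ F') (hxF' : x ∉ F') :
        ∃ G, IsFacetOf G P ∧ F₁ ∩ F₂ ⊆ G ∧ x ∉ G := by
      have := hF.pdim_lt hF'.subset hF'lt hne
      have := pdim_mono hF'.subset
      obtain ⟨G, hG, hF'G, hxG⟩ := ih _ (by omega) (hne.mono hF'lt.subset) hxF' hF' rfl
      exact ⟨G, hG, hF'lt.subset.trans hF'G, hxG⟩
    rcases not_and_or.1 hxF with hx₁ | hx₂
    exacts [of_ssuperset hF₁ h₁ hx₁, of_ssuperset hF₂ h₂ hx₂]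

lemma pdim_inter_biInter_add_card_le {α : Type*} {P : Set (ι → ℝ)} (G : α → Set (ι → ℝ))
    (x : α → ι → ℝ) (s : Finset α) (hG : ∀ j ∈ s, IsFaceOf (G j) P)
    (hx : ∀ j ∈ s, x j ∈ P ∧ x j ∉ G j ∧ ∀ l ∈ s, l ≠ j → x j ∈ G l)
    (hne : (P ∩ ⋂ j ∈ s, G j).Nonempty) :
    pdim (P ∩ ⋂ j ∈ s, G j) + s.card ≤ pdim P := by
  classical
  induction s using Finset.induction_on with
  | empty => simp
  | insert a s ha ih =>
    have hG' (j) (hj : j ∈ s) := hG j (Finset.mem_insert_of_mem hj)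
    have hx' (j) (hj : j ∈ s) := hx j (Finset.mem_insert_of_mem hj)
    have hsub : P ∩ ⋂ j ∈ insert a s, G j ⊂ P ∩ ⋂ j ∈ s, G j := by
      rw [Finset.set_biInter_insert, inter_left_comm]
      refine (ssubset_iff_of_subset inter_subset_right).2 ⟨x a, ?_, fun hxa => ?_⟩
      · obtain ⟨hxP, -, hxG⟩ := hx a (Finset.mem_insert_self a s)
        exact ⟨hxP, mem_iInter₂.2 fun l hl =>
          hxG l (Finset.mem_insert_of_mem hl) (ne_of_mem_of_not_mem hl ha)⟩
      · exact (hx a (Finset.mem_insert_self a s)).2.1 hxa.1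
    have := (isFaceOf_inter_biInter G _ hG).pdim_lt
      (isFaceOf_inter_biInter G s hG').subset hsub hne
    have := ih hG' (fun j hj => ⟨(hx' j hj).1, (hx' j hj).2.1,
      fun l hl => (hx' j hj).2.2 l (Finset.mem_insert_of_mem hl)⟩) (hne.mono hsub.subset)
    rw [Finset.card_insert_of_notMem ha]
    omega

end Facets

lemma eq_of_not_of_not_of_card_eq_sub_one {α : Type*} [Finite α] {p : α → Prop}
    (hp : Nat.card {a // p a} = Nat.card α - 1) {a b : α} (ha : ¬p a) (hb : ¬p b) : a = b := by
  classical
  have := Fintype.ofFinite α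
  have hle : Fintype.card {a // ¬p a} ≤ 1 := by
    rw [Fintype.card_subtype_compl]
    simp only [← Nat.card_eq_fintype_card, hp]
    omega
  exact congrArg Subtype.val ((Fintype.card_le_one_iff_subsingleton.1 hle).elim ⟨a, ha⟩ ⟨b, hb⟩)

theorem special_simplex_codim_face_general {q m n : ℕ} (V : Finset (Fin q → ℝ))
    (P : Set (Fin q → ℝ)) (hP : P = convexHull ℝ (V : Set (Fin q → ℝ)))
    (hdim : pdim P = m) (v : Fin n → (Fin q → ℝ))
    (hvert : ∀ i, v i ∈ Set.extremePoints ℝ P)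
    (hspecial : ∀ F, IsFacetOf F P → Nat.card {i : Fin n // v i ∈ F} = n - 1)
    (F : Set (Fin q → ℝ)) (hF : IsFaceOf F P) (hFne : F.Nonempty)
    (k : ℕ) (hcodim : pdim F + k = m)
    (hmiss : ∀ i : Fin n, (i : ℕ) < k → v i ∉ F) :
    ∀ i : Fin n, k ≤ (i : ℕ) → v i ∈ F := by
  subst hP hdim
  intro i hi
  by_contra hvi
  set S := insert i (Finset.Iio (⟨k, hi.trans_lt i.2⟩ : Fin n))
  have hS : ∀ j ∈ S, v j ∉ F := by
    simp only [S, Finset.mem_insert, Finset.mem_Iio, Fin.lt_def]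
    rintro j (rfl | hj)
    exacts [hvi, hmiss j hj]
  choose! G hG hFG hvG using fun j hj =>
    hF.exists_isFacetOf_superset_notMem V hFne (hvert j).1 (hS j hj)
  have hFsub : F ⊆ convexHull ℝ ↑V ∩ ⋂ j ∈ S, G j :=
    subset_inter hF.subset (subset_iInter₂ hFG)
  have hchain := pdim_inter_biInter_add_card_le G v S (fun j hj => (hG j hj).1)
    (fun j hj => ⟨(hvert j).1, hvG j hj, fun l hl hlj => by_contra fun hvl =>
      hlj (eq_of_not_of_not_of_card_eq_sub_one (p := fun j => v j ∈ G l)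
        (by simpa using hspecial _ (hG l hl)) hvl (hvG l hl)).symm⟩) (hFne.mono hFsub)
  have hcard : S.card = k + 1 := by
    rw [Finset.card_insert_of_notMem (by simpa [Fin.lt_def] using hi), Fin.card_Iio]
  have := pdim_mono hFsub
  omega

/-- Lemma 3.4 of Athanasiadis: if `v 0, …, v (n-1)` are the vertices of a special simplex
in the `m`-dimensional polytope `P` (each facet of `P` contains exactly `n-1` of them) and
`F` is a face of codimension `k`, `1 ≤ k ≤ n-1`, containing none of `v 0, …, v (k-1)`,
then `F` contains `v i` for all `k ≤ i ≤ n-1`. -/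
theorem special_simplex_codim_face {q m n : ℕ} (V : Finset (Fin q → ℝ))
    (P : Set (Fin q → ℝ)) (hP : P = convexHull ℝ (V : Set (Fin q → ℝ)))
    (hdim : pdim P = m) (v : Fin n → (Fin q → ℝ))
    (hvert : ∀ i, v i ∈ Set.extremePoints ℝ P) (hinj : Function.Injective v)
    (hspecial : ∀ F, IsFacetOf F P → Nat.card {i : Fin n // v i ∈ F} = n - 1)
    (F : Set (Fin q → ℝ)) (hF : IsFaceOf F P) (hFne : F.Nonempty)
    (k : ℕ) (hk1 : 1 ≤ k) (hkn : k ≤ n - 1) (hcodim : pdim F + k = m)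
    (hmiss : ∀ i : Fin n, (i : ℕ) < k → v i ∉ F) :
    ∀ i : Fin n, k ≤ (i : ℕ) → v i ∈ F :=
  special_simplex_codim_face_general V P hP hdim v hvert hspecial F hF hFne k hcodim hmiss
end

section
/- In the Birkhoff polytope of doubly stochastic n×n matrices, the n permutation matrices corresponding to the powers of the n-cycle (1 2 ... n) form the vertex set of a special simplex: every facet of the Birkhoff polytope, given by x_{ij} = 0, contains exactly n-1 of these matrices. -/
/-- The Birkhoff polytope of doubly stochastic `n × n` real matrices. -/
def Birkhoff (n : ℕ) : Set (Matrix (Fin n) (Fin n) ℝ) :=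
  {x | (∀ i j, 0 ≤ x i j) ∧ (∀ i, ∑ j, x i j = 1) ∧ (∀ j, ∑ i, x i j = 1)}

/-- The permutation matrix of the `k`-th power of the cycle `(1 2 ⋯ n)`,
i.e. the cyclic shift sending column `j` to row `j + k`. -/
def cycleMat (n : ℕ) (k : Fin n) : Matrix (Fin n) (Fin n) ℝ :=
  fun i j => if i = j + k then 1 else 0

/-- The `n` permutation matrices corresponding to the powers of the `n`-cycle form the
vertex set of a special simplex in the Birkhoff polytope: they are (distinct) points of the
polytope and every facet `x i j = 0` contains exactly `n - 1` of them. -/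
theorem cycle_powers_special_simplex (n : ℕ) :
    (∀ k, cycleMat n k ∈ Birkhoff n) ∧
    Function.Injective (cycleMat n) ∧
    ∀ i j : Fin n, Nat.card {k : Fin n // cycleMat n k i j = 0} = n - 1 := by
  rcases Nat.eq_zero_or_pos n with rfl | hn
  · exact ⟨fun k => k.elim0, fun k => k.elim0, fun i => i.elim0⟩
  have : NeZero n := ⟨hn.ne'⟩
  have key : ∀ (i j k : Fin n), (i = j + k) ↔ (k = i - j) := by
    intro i j k
    constructor
    · rintro rfl; rw [add_comm, add_sub_cancel_right]
    · rintro rfl; rw [add_sub_cancel]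
  refine ⟨fun k => ⟨?_, ?_, ?_⟩, ?_, ?_⟩
  · intro i j
    unfold cycleMat
    split <;> norm_num
  · intro i
    have : ∀ j : Fin n, cycleMat n k i j = if j = i - k then 1 else 0 := by
      intro j
      unfold cycleMat
      congr 1
      simp only [eq_iff_iff]
      constructor
      · rintro rfl; rw [add_sub_cancel_right]
      · rintro rfl; rw [sub_add_cancel]
    simp [this]
  · intro j
    have : ∀ i : Fin n, cycleMat n k i j = if i = j + k then 1 else 0 := fun i => rfl
    simp [this]
  · intro k k' h
    have := congrFun (congrFun h k) 0
    unfold cycleMat at this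
    rw [if_pos (by rw [zero_add])] at this
    by_contra hne
    rw [if_neg (fun hh => hne ?_)] at this
    · norm_num at this
    · rwa [zero_add] at hh
  · intro i j
    have : ∀ k : Fin n, cycleMat n k i j = 0 ↔ k ≠ i - j := by
      intro k
      unfold cycleMat
      rcases eq_or_ne k (i - j) with rfl | hk
      · rw [if_pos ((key i j _).2 rfl)]; simp
      · rw [if_neg (fun h => hk ((key i j k).1 h))]; simpa using hk
    rw [Nat.card_eq_fintype_card]
    rw [Fintype.card_congr (Equiv.subtypeEquivRight this)]
    simp [Fintype.card_subtype_compl]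
end

section
/- Any n permutation matrices with pairwise disjoint supports (i.e., no two having a 1 in the same position) are the vertices of a special simplex in the Birkhoff polytope of doubly stochastic n×n matrices: each facet x_{ij} = 0 contains exactly n-1 of them. -/
/-- A permutation matrix: a 0-1 matrix with exactly one `1` in each row and each column. -/
def IsPermMatrix {n : ℕ} (A : Matrix (Fin n) (Fin n) ℝ) : Prop :=
  (∀ i j, A i j = 0 ∨ A i j = 1) ∧ (∀ i, ∃! j, A i j = 1) ∧ (∀ j, ∃! i, A i j = 1)

/-- Any `n` permutation matrices with pairwise disjoint supports are the vertices of a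
special simplex in the Birkhoff polytope: each facet `x i j = 0` contains exactly `n - 1`
of them. -/
theorem disjoint_perms_special_simplex {n : ℕ} (A : Fin n → Matrix (Fin n) (Fin n) ℝ)
    (hperm : ∀ k, IsPermMatrix (A k))
    (hdisj : ∀ k l, k ≠ l → ∀ i j, ¬(A k i j = 1 ∧ A l i j = 1)) :
    (∀ k, A k ∈ Birkhoff n) ∧
    ∀ i j : Fin n, Nat.card {k : Fin n // A k i j = 0} = n - 1 := by
  constructor
  · intro k
    obtain ⟨h01, hrow, hcol⟩ := hperm k
    refine ⟨fun i j => ?_, fun i => ?_, fun j => ?_⟩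
    · rcases h01 i j with h | h <;> simp [h]
    · obtain ⟨j0, hj0, huniq⟩ := hrow i
      rw [Finset.sum_eq_single j0]
      · exact hj0
      · intro b _ hb
        rcases h01 i b with h | h
        · exact h
        · exact absurd (huniq b h) hb
      · simp
    · obtain ⟨i0, hi0, huniq⟩ := hcol j
      rw [Finset.sum_eq_single i0]
      · exact hi0
      · intro b _ hb
        rcases (hperm k).1 b j with h | h
        · exact h
        · exact absurd (huniq b h) hb
      · simp
  · intro i j
    have hf : ∀ k, ∃! j', A k i j' = 1 := fun k => (hperm k).2.1 i
    choose f hf1 hf2 using hf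
    have hinj : Function.Injective f := by
      intro k l hkl
      by_contra h
      exact hdisj k l h i (f k) ⟨hf1 k, hkl ▸ hf1 l⟩
    have hsurj : Function.Surjective f := Finite.injective_iff_surjective.mp hinj
    obtain ⟨k0, hk0⟩ := hsurj j
    have hk01 : A k0 i j = 1 := hk0 ▸ hf1 k0
    have heq : ∀ k : Fin n, A k i j = 0 ↔ k ≠ k0 := by
      intro k
      constructor
      · rintro h rfl
        rw [h] at hk01; norm_num at hk01
      · intro hne
        rcases (hperm k).1 i j with h | h
        · exact h
        · exact absurd ⟨h, hk01⟩ (hdisj k k0 hne i j)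
    calc Nat.card {k : Fin n // A k i j = 0}
        = Nat.card {k : Fin n // k ≠ k0} := Nat.card_congr (Equiv.subtypeEquivRight heq)
      _ = n - 1 := by
          simp [Nat.card_eq_fintype_card, Fintype.card_subtype_compl,
            Fintype.card_subtype_eq]
end
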